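/- arXiv:funct-an/9302004 — 3 statements merged into one kernel-verified Lean document; each statement's English description precedes it below -/
import Mathlib

section
/- Let f ∈ L¹(ℝⁿ) with f(x) ≥ 0 almost everywhere and ∫_{ℝⁿ} f(x) dx = 1, and let Q ⊂ ℝⁿ be a bounded measurable set of positive Lebesgue measure. Then r^{−n} ∫_{rQ} ∫_{rQ} f(x−y) dx dy → meas(Q) as r → ∞, where rQ = {rx : x ∈ Q}. -/
/-!
With `g_Q(z) = meas (Q ∩ (Q - z))` the covariogram of `Q`, Fubini and translation invariance give
`∫_{rQ} ∫_{rQ} f(x - y) dx dy = ∫ f(z) g_{rQ}(z) dz = rⁿ ∫ f(z) g_Q(z / r) dz`.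
Translation is continuous in measure, so `g_Q(z / r) → meas Q` for every `z`; since
`g_Q ≤ meas Q` and `f` is integrable, dominated convergence gives the limit `∫ f · meas Q`.
-/

open MeasureTheory Filter Module Pointwise

open scoped ENNReal symmDiff Topology

def covariogram {G : Type*} [Add G] [MeasurableSpace G] (μ : Measure G) (s : Set G) (z : G) :
    ℝ≥0∞ :=
  μ ((z + ·) ⁻¹' s ∩ s)

section Group

variable {G : Type*} [MeasurableSpace G] [AddCommGroup G] [MeasurableAdd₂ G]
  {μ : Measure G} {s : Set G}

theorem measurable_covariogram [SFinite μ] (hs : MeasurableSet s) :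
    Measurable (covariogram μ s) :=
  measurable_measure_prodMk_left
    ((hs.preimage (measurable_fst.add measurable_snd)).inter (hs.preimage measurable_snd))

variable [MeasurableNeg G] [μ.IsAddLeftInvariant]

theorem setLIntegral_setLIntegral_sub_eq_lintegral_mul_covariogram [SFinite μ] {φ : G → ℝ≥0∞}
    (hφ : Measurable φ) (hs : MeasurableSet s) :
    ∫⁻ x in s, ∫⁻ y in s, φ (x - y) ∂μ ∂μ = ∫⁻ z, φ z * covariogram μ s z ∂μ := by
  have hind : Measurable (s.indicator (1 : G → ℝ≥0∞)) := measurable_one.indicator hs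
  have translate (y : G) :
      ∫⁻ x in s, φ (x - y) ∂μ = ∫⁻ z, φ z * s.indicator 1 (z + y) ∂μ := by
    rw [← lintegral_indicator hs, ← lintegral_add_right_eq_self _ y]
    congr 1 with z
    by_cases hz : z + y ∈ s <;> simp [hz]
  calc ∫⁻ x in s, ∫⁻ y in s, φ (x - y) ∂μ ∂μ
      = ∫⁻ y in s, ∫⁻ x in s, φ (x - y) ∂μ ∂μ :=
        lintegral_lintegral_swap (hφ.comp (measurable_fst.sub measurable_snd)).aemeasurable
    _ = ∫⁻ y in s, ∫⁻ z, φ z * s.indicator 1 (z + y) ∂μ ∂μ := by simp only [translate]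
    _ = ∫⁻ z, ∫⁻ y in s, φ z * s.indicator 1 (z + y) ∂μ ∂μ :=
        lintegral_lintegral_swap
          ((hφ.comp measurable_snd).mul
            (hind.comp (measurable_snd.add measurable_fst))).aemeasurable
    _ = ∫⁻ z, φ z * covariogram μ s z ∂μ := by
        congr 1 with z
        have hz : MeasurableSet ((z + ·) ⁻¹' s) := hs.preimage (measurable_const_add z)
        rw [covariogram, ← Measure.restrict_apply hz, ← lintegral_indicator_one hz,
          ← lintegral_const_mul _ (measurable_one.indicator hz)]
        rfl

variable [μ.IsNegInvariant]

theorem setIntegral_setIntegral_sub_congr_ae {f g : G → ℝ} (hfg : f =ᵐ[μ] g) :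
    ∫ x in s, ∫ y in s, f (x - y) ∂μ ∂μ = ∫ x in s, ∫ y in s, g (x - y) ∂μ ∂μ := by
  congr 1 with x
  exact integral_congr_ae (ae_restrict_of_ae
    ((Measure.measurePreserving_sub_left μ x).quasiMeasurePreserving.ae_eq hfg))

theorem setIntegral_setIntegral_sub_eq_toReal_lintegral [SFinite μ] {g : G → ℝ}
    (hgm : Measurable g) (hg : Integrable g μ) (hg0 : 0 ≤ᵐ[μ] g) :
    ∫ x in s, ∫ y in s, g (x - y) ∂μ ∂μ =
      (∫⁻ x in s, ∫⁻ y in s, ENNReal.ofReal (g (x - y)) ∂μ ∂μ).toReal := by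
  have inner (x : G) : ∫ y in s, g (x - y) ∂μ =
      (∫⁻ y in s, ENNReal.ofReal (g (x - y)) ∂μ).toReal :=
    integral_eq_lintegral_of_nonneg_ae
      (ae_restrict_of_ae
        ((Measure.measurePreserving_sub_left μ x).quasiMeasurePreserving.ae hg0))
      (hgm.comp (measurable_const.sub measurable_id)).aestronglyMeasurable
  simp only [inner]
  refine integral_toReal ?_
    (.of_forall fun x => (hg.comp_sub_left x).integrableOn.setLIntegral_lt_top)
  exact (hgm.comp (measurable_fst.sub measurable_snd)).ennreal_ofReal
    |>.lintegral_prod_right' |>.aemeasurable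

end Group

section Topological

variable {G : Type*} [AddCommGroup G] [TopologicalSpace G] [IsTopologicalAddGroup G]
  [MeasurableSpace G] [BorelSpace G] [R1Space G] {μ : Measure G} {s : Set G}

theorem tendsto_covariogram_nhds_zero [μ.IsAddLeftInvariant] [μ.InnerRegularCompactLTTop]
    [IsLocallyFiniteMeasure μ] (hs : MeasurableSet s) (hμs : μ s ≠ ∞) :
    Tendsto (covariogram μ s) (𝓝 0) (𝓝 (μ s)) := by
  let τ : C(G, C(G, G)) := (ContinuousMap.mk (fun p : G × G => p.1 + p.2)).curry
  have hτ0 : τ 0 ⁻¹' s = s := by ext; simp [τ]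
  have hsymm : Tendsto (fun t => μ ((τ t ⁻¹' s) ∆ s)) (𝓝 0) (𝓝 0) := by
    simpa only [hτ0] using tendsto_measure_symmDiff_preimage_nhds_zero (τ.continuous.tendsto 0)
      (.of_forall fun t => measurePreserving_add_left μ t) (measurePreserving_add_left μ 0)
      hs.nullMeasurableSet hμs
  have hlower (t : G) : μ s - μ ((τ t ⁻¹' s) ∆ s) ≤ covariogram μ s t := by
    rw [tsub_le_iff_right, covariogram, Set.inter_comm]
    exact (measure_le_inter_add_sdiff μ s (τ t ⁻¹' s)).trans
      (add_le_add_right (measure_mono fun x hx => Or.inr hx) _)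
  refine tendsto_of_tendsto_of_tendsto_of_le_of_le ?_ tendsto_const_nhds hlower
    fun t => measure_mono Set.inter_subset_right
  simpa using ENNReal.Tendsto.sub tendsto_const_nhds hsymm (.inl hμs)

end Topological

section FiniteDimensional

variable {E : Type*} [NormedAddCommGroup E] [NormedSpace ℝ E] [MeasurableSpace E] [BorelSpace E]
  [FiniteDimensional ℝ E] {μ : Measure E} [μ.IsAddHaarMeasure] {s : Set E}

theorem covariogram_smul {r : ℝ} (hr : r ≠ 0) (z : E) :
    covariogram μ (r • s) z =
      ENNReal.ofReal (|r| ^ finrank ℝ E) * covariogram μ s (r⁻¹ • z) := by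
  have hset : (z + ·) ⁻¹' (r • s) ∩ r • s = r • ((r⁻¹ • z + ·) ⁻¹' s ∩ s) := by
    ext u
    simp only [Set.mem_inter_iff, Set.mem_preimage, Set.mem_smul_set_iff_inv_smul_mem₀ hr,
      smul_add]
  rw [covariogram, hset, Measure.addHaar_smul, covariogram, abs_pow]

theorem setLIntegral_smul_setLIntegral_smul_sub {φ : E → ℝ≥0∞} (hφ : Measurable φ)
    (hs : MeasurableSet s) {r : ℝ} (hr : 0 < r) :
    ∫⁻ x in r • s, ∫⁻ y in r • s, φ (x - y) ∂μ ∂μ =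
      ENNReal.ofReal (r ^ finrank ℝ E) * ∫⁻ z, φ z * covariogram μ s (r⁻¹ • z) ∂μ := by
  rw [setLIntegral_setLIntegral_sub_eq_lintegral_mul_covariogram hφ (hs.const_smul₀ r),
    ← lintegral_const_mul' _ _ ENNReal.ofReal_ne_top]
  congr 1 with z
  rw [covariogram_smul hr.ne', abs_of_pos hr, mul_left_comm]

theorem tendsto_lintegral_mul_covariogram_inv_smul {φ : E → ℝ≥0∞} (hφ : Measurable φ)
    (hφ_fin : ∫⁻ z, φ z ∂μ ≠ ∞) (hs : MeasurableSet s) (hμs : μ s ≠ ∞) :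
    Tendsto (fun r : ℝ => ∫⁻ z, φ z * covariogram μ s (r⁻¹ • z) ∂μ) atTop
      (𝓝 ((∫⁻ z, φ z ∂μ) * μ s)) := by
  rw [← lintegral_mul_const _ hφ]
  refine tendsto_lintegral_filter_of_dominated_convergence (fun z => φ z * μ s)
    (.of_forall fun r => hφ.mul ((measurable_covariogram hs).comp (measurable_const_smul r⁻¹)))
    (.of_forall fun r => .of_forall fun z => by
      gcongr
      exact measure_mono Set.inter_subset_right)
    (by rw [lintegral_mul_const _ hφ]; exact ENNReal.mul_ne_top hφ_fin hμs) ?_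
  have hinv (z : E) : Tendsto (fun r : ℝ => r⁻¹ • z) atTop (𝓝 0) := by
    simpa using (tendsto_inv_atTop_zero (𝕜 := ℝ)).smul_const z
  filter_upwards [ae_lt_top hφ hφ_fin] with z hz
  exact ENNReal.Tendsto.const_mul ((tendsto_covariogram_nhds_zero hs hμs).comp (hinv z))
    (.inr hz.ne)

theorem tendsto_inv_pow_mul_setIntegral_setIntegral_smul_sub {g : E → ℝ} (hg : Integrable g μ)
    (hg0 : 0 ≤ᵐ[μ] g) (hs : MeasurableSet s) (hμs : μ s ≠ ∞) :
    Tendsto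
      (fun r : ℝ => (r ^ finrank ℝ E)⁻¹ * ∫ x in r • s, ∫ y in r • s, g (x - y) ∂μ ∂μ) atTop
      (𝓝 ((∫ z, g z ∂μ) * (μ s).toReal)) := by
  set g' := hg.1.mk g
  have hgg' : g =ᵐ[μ] g' := hg.1.ae_eq_mk
  have hg'm : Measurable g' := hg.1.stronglyMeasurable_mk.measurable
  have hg' : Integrable g' μ := hg.congr hgg'
  have hg'0 : 0 ≤ᵐ[μ] g' := hg0.trans hgg'.le
  have hφ : Measurable fun z => ENNReal.ofReal (g' z) := hg'm.ennreal_ofReal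
  have hφ_fin : ∫⁻ z, ENNReal.ofReal (g' z) ∂μ ≠ ∞ := hg'.lintegral_lt_top.ne
  have rescale (r : ℝ) (hr : 0 < r) :
      (r ^ finrank ℝ E)⁻¹ * ∫ x in r • s, ∫ y in r • s, g (x - y) ∂μ ∂μ =
        (∫⁻ z, ENNReal.ofReal (g' z) * covariogram μ s (r⁻¹ • z) ∂μ).toReal := by
    rw [setIntegral_setIntegral_sub_congr_ae hgg',
      setIntegral_setIntegral_sub_eq_toReal_lintegral hg'm hg' hg'0,
      setLIntegral_smul_setLIntegral_smul_sub hφ hs hr,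
      ENNReal.toReal_mul, ENNReal.toReal_ofReal (by positivity),
      inv_mul_cancel_left₀ (by positivity)]
  have limit :
      ((∫⁻ z, ENNReal.ofReal (g' z) ∂μ) * μ s).toReal = (∫ z, g z ∂μ) * (μ s).toReal := by
    rw [ENNReal.toReal_mul, ← ofReal_integral_eq_lintegral_ofReal hg' hg'0,
      ENNReal.toReal_ofReal (integral_nonneg_of_ae hg'0), integral_congr_ae hgg']
  rw [← limit]
  refine ((ENNReal.tendsto_toReal (ENNReal.mul_ne_top hφ_fin hμs)).comp
    (tendsto_lintegral_mul_covariogram_inv_smul hφ hφ_fin hs hμs)).congr' ?_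
  filter_upwards [eventually_gt_atTop 0] with r hr
  exact (rescale r hr).symm

end FiniteDimensional

theorem stmt7_general {n : ℕ} (f : EuclideanSpace ℝ (Fin n) → ℝ)
    (hf : Integrable f (volume : Measure (EuclideanSpace ℝ (Fin n))))
    (hpos : ∀ᵐ x ∂(volume : Measure (EuclideanSpace ℝ (Fin n))), 0 ≤ f x)
    (hone : ∫ x : EuclideanSpace ℝ (Fin n), f x = 1)
    (Q : Set (EuclideanSpace ℝ (Fin n))) (hQm : MeasurableSet Q)
    (hQb : Bornology.IsBounded Q) :
    Tendsto (fun r : ℝ => (r ^ n)⁻¹ * ∫ x in r • Q, ∫ y in r • Q, f (x - y))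
      atTop (nhds (volume Q).toReal) := by
  have h := tendsto_inv_pow_mul_setIntegral_setIntegral_smul_sub hf hpos hQm hQb.measure_lt_top.ne
  rwa [hone, one_mul, finrank_euclideanSpace_fin] at h

/-- If `f ∈ L¹(ℝⁿ)`, `f ≥ 0` a.e., `∫ f = 1`, and `Q ⊂ ℝⁿ` is a bounded measurable set of
positive measure, then `r^{−n} ∫_{rQ} ∫_{rQ} f(x−y) dx dy → meas(Q)` as `r → ∞`. -/
theorem stmt7 {n : ℕ} (f : EuclideanSpace ℝ (Fin n) → ℝ)
    (hf : Integrable f (volume : Measure (EuclideanSpace ℝ (Fin n))))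
    (hpos : ∀ᵐ x ∂(volume : Measure (EuclideanSpace ℝ (Fin n))), 0 ≤ f x)
    (hone : ∫ x : EuclideanSpace ℝ (Fin n), f x = 1)
    (Q : Set (EuclideanSpace ℝ (Fin n))) (hQm : MeasurableSet Q)
    (hQb : Bornology.IsBounded Q) (hQpos : 0 < volume Q) :
    Tendsto (fun r : ℝ => (r ^ n)⁻¹ * ∫ x in r • Q, ∫ y in r • Q, f (x - y))
      atTop (nhds (volume Q).toReal) :=
  stmt7_general f hf hpos hone Q hQm hQb
end

section
/- Let f ∈ L¹(ℝⁿ) with f ≥ 0 almost everywhere and ∫_{ℝⁿ} f = 1, and suppose there exist constants p > 1 and C₁ > 0 such that 1 − ∫_{B_r(0)} f(x) dx ≤ C₁ r^{−p} for all r ≥ 1. Let Q ⊂ ℝⁿ be a bounded measurable set such that there is a constant C₀ with meas({x ∈ Q : dist(x, ℝⁿ∖Q) ≤ δ}) ≤ C₀ δ for all δ > 0 (as holds for a bounded domain with C¹ boundary). Then there exists a constant C > 0 such that |r^{−n} ∫_{rQ} ∫_{rQ} f(x−y) dx dy − meas(Q)| ≤ C/r for all r ≥ 1. -/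
open MeasureTheory Filter Pointwise

open scoped ENNReal

/-!
Put `g x = 1 - ∫_{rQ} f (x - y) dy`, so that `0 ≤ g ≤ 1` and
`r ^ n · meas Q - ∫_{rQ} ∫_{rQ} f (x - y) = ∫_{rQ} g`. If `x` is farther than `t ≥ 1` from the
complement of `rQ`, the ball of radius `t` about `x` lies in `rQ`, so the tail hypothesis gives
`g x ≤ C₁ t ^ (-p)`. Cutting `rQ` into the dyadic collars `{dist (x, (rQ)ᶜ) ≤ 2 ^ (k + 1)}`, whose
measures are `O(r ^ (n - 1) 2 ^ k)` by scaling, bounds `∫_{rQ} g` by `r ^ (n - 1)` times the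
series `∑ 2 ^ k 2 ^ (-p k)`, which converges because `p > 1`.
-/

def innerCollar {X : Type*} [PseudoMetricSpace X] (Q : Set X) (δ : ℝ) : Set X :=
  {x ∈ Q | Metric.infDist x Qᶜ ≤ δ}

section InnerCollar

variable {X : Type*} [PseudoMetricSpace X]

lemma measurableSet_innerCollar [MeasurableSpace X] [OpensMeasurableSpace X] {Q : Set X}
    (hQ : MeasurableSet Q) (δ : ℝ) : MeasurableSet (innerCollar Q δ) :=
  hQ.inter (measurableSet_le (Metric.continuous_infDist_pt _).measurable measurable_const)

lemma closedBall_subset_of_lt_infDist_compl {Q : Set X} {x : X} {t : ℝ}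
    (ht : t < Metric.infDist x Qᶜ) : Metric.closedBall x t ⊆ Q :=
  (Metric.closedBall_subset_ball ht).trans Metric.ball_infDist_compl_subset

lemma innerCollar_smul {E : Type*} [NormedAddCommGroup E] [NormedSpace ℝ E] {r : ℝ} (hr : 0 < r)
    (Q : Set E) (δ : ℝ) : innerCollar (r • Q) δ = r • innerCollar Q (δ / r) := by
  ext x
  obtain ⟨z, rfl⟩ : ∃ z, x = r • z := ⟨r⁻¹ • x, (smul_inv_smul₀ hr.ne' x).symm⟩
  have hcompl : (r • Q)ᶜ = r • Qᶜ := by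
    ext w
    simp only [Set.mem_compl_iff, Set.mem_smul_set_iff_inv_smul_mem₀ hr.ne']
  simp only [innerCollar, Set.smul_mem_smul_set_iff₀ hr.ne', Set.mem_sep_iff, hcompl,
    infDist_smul₀ hr.ne', Real.norm_of_nonneg hr.le, le_div_iff₀' hr]

lemma measure_innerCollar_smul_le {E : Type*} [NormedAddCommGroup E] [NormedSpace ℝ E]
    [FiniteDimensional ℝ E] [MeasurableSpace E] [BorelSpace E] (μ : Measure E) [μ.IsAddHaarMeasure]
    {Q : Set E} {C : ℝ} (hQ : ∀ δ, 0 < δ → μ (innerCollar Q δ) ≤ ENNReal.ofReal (C * δ))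
    {r : ℝ} (hr : 0 < r) {δ : ℝ} (hδ : 0 < δ) :
    μ (innerCollar (r • Q) δ) ≤ ENNReal.ofReal (C * r ^ Module.finrank ℝ E / r * δ) := by
  rw [innerCollar_smul hr, Measure.addHaar_smul_of_nonneg μ hr.le]
  calc _ ≤ ENNReal.ofReal (r ^ Module.finrank ℝ E) * ENNReal.ofReal (C * (δ / r)) := by
        gcongr; exact hQ _ (by positivity)
    _ = _ := by
        rw [← ENNReal.ofReal_mul (by positivity)]
        congr 1
        field_simp

lemma ofReal_le_tsum_indicator_innerCollar {p C : ℝ} {R : Set X} {g : X → ℝ}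
    (hg1 : ∀ x ∈ R, g x ≤ 1)
    (hdecay : ∀ x ∈ R, ∀ t, 1 ≤ t → t < Metric.infDist x Rᶜ → g x ≤ C / t ^ p)
    {x : X} (hx : x ∈ R) :
    ENNReal.ofReal (g x) ≤ ∑' k : ℕ, ENNReal.ofReal (max 1 (C * 2 ^ p) / (2 ^ p) ^ k) *
      (innerCollar R (2 ^ (k + 1))).indicator 1 x := by
  set d := Metric.infDist x Rᶜ
  rcases lt_or_ge d 2 with hd | hd
  · refine le_trans ?_ (ENNReal.le_tsum 0)
    have hx0 : x ∈ innerCollar R (2 ^ (0 + 1)) := ⟨hx, by simpa using hd.le⟩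
    rw [Set.indicator_of_mem hx0, Pi.one_apply, mul_one, pow_zero, div_one]
    exact ENNReal.ofReal_le_ofReal ((hg1 x hx).trans (le_max_left _ _))
  · obtain ⟨k, hk, hk'⟩ := exists_nat_pow_near (by linarith : 1 ≤ d / 2) one_lt_two
    refine le_trans ?_ (ENNReal.le_tsum (k + 1))
    have hxk : x ∈ innerCollar R (2 ^ (k + 1 + 1)) := ⟨hx, by rw [pow_succ]; linarith⟩
    rw [Set.indicator_of_mem hxk, Pi.one_apply, mul_one]
    refine ENNReal.ofReal_le_ofReal
      ((hdecay x hx (2 ^ k) (one_le_pow₀ one_le_two) (by linarith)).trans ?_)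
    rw [← Real.rpow_pow_comm zero_le_two, pow_succ', ← div_div]
    gcongr
    rw [le_div_iff₀ (by positivity)]
    exact le_max_right _ _

lemma exists_setLIntegral_le_of_le_div_rpow_infDist_compl [MeasurableSpace X]
    [OpensMeasurableSpace X] (μ : Measure X) {p : ℝ} (hp : 1 < p) (C : ℝ) :
    ∃ K > 0, ∀ {R : Set X} {g : X → ℝ} {a : ℝ}, MeasurableSet R → (∀ x ∈ R, g x ≤ 1) →
      (∀ x ∈ R, ∀ t, 1 ≤ t → t < Metric.infDist x Rᶜ → g x ≤ C / t ^ p) →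
      (∀ δ, 0 < δ → μ (innerCollar R δ) ≤ ENNReal.ofReal (a * δ)) →
      ∫⁻ x in R, ENNReal.ofReal (g x) ∂μ ≤ ENNReal.ofReal (K * a) := by
  set s : ℝ := 2 ^ p
  set M : ℝ := max 1 (C * s)
  have hs : 2 < s := by simpa using Real.rpow_lt_rpow_of_exponent_lt one_lt_two hp
  have hratio : 0 < 1 - 2 / s := by rw [sub_pos, div_lt_one (by linarith)]; exact hs
  have hM : 0 < M := lt_max_of_lt_left one_pos
  refine ⟨2 * M / (1 - 2 / s), by positivity, fun {R g a} hR hg1 hdecay hcollar => ?_⟩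
  have hind : ∀ k : ℕ, Measurable ((innerCollar R (2 ^ (k + 1))).indicator (1 : X → ℝ≥0∞)) :=
    fun k => measurable_one.indicator (measurableSet_innerCollar hR _)
  calc ∫⁻ x in R, ENNReal.ofReal (g x) ∂μ
      ≤ ∫⁻ x in R, ∑' k : ℕ, ENNReal.ofReal (M / s ^ k) *
          (innerCollar R (2 ^ (k + 1))).indicator 1 x ∂μ :=
        setLIntegral_mono (Measurable.tsum fun k => (hind k).const_mul _)
          fun x hx => ofReal_le_tsum_indicator_innerCollar hg1 hdecay hx
    _ ≤ ∫⁻ x, ∑' k : ℕ, ENNReal.ofReal (M / s ^ k) *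
          (innerCollar R (2 ^ (k + 1))).indicator 1 x ∂μ := setLIntegral_le_lintegral _ _
    _ = ∑' k : ℕ, ENNReal.ofReal (M / s ^ k) * μ (innerCollar R (2 ^ (k + 1))) := by
        rw [lintegral_tsum fun k => ((hind k).const_mul _).aemeasurable]
        refine tsum_congr fun k => ?_
        rw [lintegral_const_mul _ (hind k),
          lintegral_indicator_one (measurableSet_innerCollar hR _)]
    _ ≤ ∑' k : ℕ, ENNReal.ofReal (M / s ^ k) * ENNReal.ofReal (a * 2 ^ (k + 1)) :=
        ENNReal.tsum_le_tsum fun k => by gcongr; exact hcollar _ (by positivity)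
    _ = ∑' k : ℕ, ENNReal.ofReal (2 * M * a) * ENNReal.ofReal (2 / s) ^ k := by
        refine tsum_congr fun k => ?_
        rw [← ENNReal.ofReal_pow (by positivity), ← ENNReal.ofReal_mul (by positivity),
          ← ENNReal.ofReal_mul' (by positivity)]
        congr 1
        rw [div_pow]
        field_simp
        ring
    _ = ENNReal.ofReal (2 * M / (1 - 2 / s) * a) := by
        rw [ENNReal.tsum_mul_left, ENNReal.tsum_geometric, ← ENNReal.ofReal_one,
          ← ENNReal.ofReal_sub _ (by positivity), ← ENNReal.ofReal_inv_of_pos hratio,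
          ← ENNReal.ofReal_mul' (by positivity)]
        congr 1
        ring

end InnerCollar

section Convolution

variable {G : Type*} [NormedAddCommGroup G] [MeasurableSpace G] [MeasurableAdd₂ G]
  [MeasurableNeg G] {μ : Measure G} [μ.IsAddLeftInvariant] {f : G → ℝ}

lemma setIntegral_comp_sub_left_nonneg [μ.IsNegInvariant] (hf₀ : 0 ≤ᵐ[μ] f) (x : G)
    (R : Set G) :
    0 ≤ ∫ y in R, f (x - y) ∂μ :=
  integral_nonneg_of_ae <| ae_restrict_of_ae <|
    (Measure.measurePreserving_sub_left μ x).quasiMeasurePreserving.ae hf₀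

lemma setIntegral_comp_sub_left_le_integral [μ.IsNegInvariant] (hf : Integrable f μ)
    (hf₀ : 0 ≤ᵐ[μ] f) (x : G) (R : Set G) : ∫ y in R, f (x - y) ∂μ ≤ ∫ y, f y ∂μ := by
  rw [← integral_sub_left_eq_self f μ x]
  exact setIntegral_le_integral (hf.comp_sub_left x)
    ((Measure.measurePreserving_sub_left μ x).quasiMeasurePreserving.ae hf₀)

lemma setIntegral_closedBall_le_setIntegral_comp_sub_left [μ.IsNegInvariant]
    (hf : Integrable f μ) (hf₀ : 0 ≤ᵐ[μ] f) {R : Set G} {x : G} {t : ℝ} (hR : Metric.closedBall x t ⊆ R) :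
    ∫ y in Metric.closedBall 0 t, f y ∂μ ≤ ∫ y in R, f (x - y) ∂μ := by
  have hpre : (x - ·) ⁻¹' Metric.closedBall 0 t = Metric.closedBall x t := by
    ext y
    simp [dist_eq_norm, norm_sub_rev]
  rw [← (Measure.measurePreserving_sub_left μ x).setIntegral_preimage_emb
    (MeasurableEquiv.subLeft x).measurableEmbedding f, hpre]
  exact setIntegral_mono_set (hf.comp_sub_left x).integrableOn
    (ae_restrict_of_ae ((Measure.measurePreserving_sub_left μ x).quasiMeasurePreserving.ae hf₀))
    hR.eventuallyLE

lemma integrable_setIntegral_comp_sub_left [SFinite μ] (hf : Integrable f μ) {R : Set G}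
    (hR : MeasurableSet R) (hRfin : μ R ≠ ⊤) :
    Integrable (fun x => ∫ y in R, f (x - y) ∂μ) μ := by
  have hind : Integrable (R.indicator fun _ => (1 : ℝ)) μ :=
    (integrable_indicator_iff hR).2 (integrableOn_const hRfin)
  refine (hind.convolution_integrand (ContinuousLinearMap.mul ℝ ℝ) hf).integral_prod_left.congr
    (ae_of_all _ fun x => ?_)
  simp only [← integral_indicator hR]
  congr 1 with y
  by_cases hy : y ∈ R <;> simp [hy]

lemma integral_mul_measureReal_sub_setIntegral_setIntegral [SFinite μ] (hf : Integrable f μ)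
    {R : Set G} (hR : MeasurableSet R) (hRfin : μ R ≠ ⊤) :
    (∫ y, f y ∂μ) * μ.real R - ∫ x in R, ∫ y in R, f (x - y) ∂μ ∂μ =
      ∫ x in R, (∫ y, f y ∂μ - ∫ y in R, f (x - y) ∂μ) ∂μ := by
  rw [integral_sub (integrableOn_const (C := ∫ y, f y ∂μ) hRfin)
    (integrable_setIntegral_comp_sub_left hf hR hRfin).integrableOn, setIntegral_const,
    smul_eq_mul, mul_comm]

lemma exists_measureReal_sub_setIntegral_setIntegral_le [μ.IsNegInvariant] [SFinite μ]
    [OpensMeasurableSpace G] (hf : Integrable f μ) (hf₀ : 0 ≤ᵐ[μ] f) (hone : ∫ y, f y ∂μ = 1)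
    {p C : ℝ} (hp : 1 < p)
    (hdecay : ∀ t : ℝ, 1 ≤ t → 1 - ∫ y in Metric.closedBall 0 t, f y ∂μ ≤ C / t ^ p) :
    ∃ K > 0, ∀ {R : Set G} {a : ℝ}, MeasurableSet R → μ R ≠ ⊤ → 0 ≤ a →
      (∀ δ, 0 < δ → μ (innerCollar R δ) ≤ ENNReal.ofReal (a * δ)) →
      0 ≤ μ.real R - ∫ x in R, ∫ y in R, f (x - y) ∂μ ∂μ ∧
        μ.real R - ∫ x in R, ∫ y in R, f (x - y) ∂μ ∂μ ≤ K * a := by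
  obtain ⟨K, hK, hdyadic⟩ := exists_setLIntegral_le_of_le_div_rpow_infDist_compl μ hp C
  refine ⟨K, hK, fun {R a} hR hRfin ha hcollar => ?_⟩
  have hdefect := integral_mul_measureReal_sub_setIntegral_setIntegral hf hR hRfin
  rw [hone, one_mul] at hdefect
  have hle : ∀ x, ∫ y in R, f (x - y) ∂μ ≤ 1 := fun x =>
    hone ▸ setIntegral_comp_sub_left_le_integral hf hf₀ x R
  have hg₀ : ∀ x, 0 ≤ 1 - ∫ y in R, f (x - y) ∂μ := fun x => sub_nonneg.2 (hle x)
  rw [hdefect]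
  refine ⟨integral_nonneg hg₀, ?_⟩
  rw [integral_eq_lintegral_of_nonneg_ae (ae_of_all _ hg₀)
    (aestronglyMeasurable_const.sub
      (integrable_setIntegral_comp_sub_left hf hR hRfin).aestronglyMeasurable).restrict]
  refine ENNReal.toReal_le_of_le_ofReal (by positivity) (hdyadic hR
    (fun x _ => by linarith [setIntegral_comp_sub_left_nonneg hf₀ x R]) (fun x _ t ht htd => ?_)
    hcollar)
  linarith [hdecay t ht, setIntegral_closedBall_le_setIntegral_comp_sub_left hf hf₀
    (closedBall_subset_of_lt_infDist_compl htd)]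

end Convolution

theorem stmt11_general {n : ℕ} (f : EuclideanSpace ℝ (Fin n) → ℝ)
    (hf : Integrable f (volume : Measure (EuclideanSpace ℝ (Fin n))))
    (hpos : ∀ᵐ x ∂(volume : Measure (EuclideanSpace ℝ (Fin n))), 0 ≤ f x)
    (hone : ∫ x : EuclideanSpace ℝ (Fin n), f x = 1)
    (p C₁ : ℝ) (hp : 1 < p)
    (hdecay : ∀ r : ℝ, 1 ≤ r →
      1 - ∫ x in Metric.closedBall (0 : EuclideanSpace ℝ (Fin n)) r, f x ≤ C₁ / r ^ p)
    (Q : Set (EuclideanSpace ℝ (Fin n))) (hQm : MeasurableSet Q)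
    (hQb : Bornology.IsBounded Q)
    (C₀ : ℝ) (hC₀ : ∀ δ : ℝ, 0 < δ →
      volume {x ∈ Q | Metric.infDist x Qᶜ ≤ δ} ≤ ENNReal.ofReal (C₀ * δ)) :
    ∃ C : ℝ, 0 < C ∧ ∀ r : ℝ, 1 ≤ r →
      |(r ^ n)⁻¹ * (∫ x in r • Q, ∫ y in r • Q, f (x - y)) - (volume Q).toReal| ≤ C / r := by
  obtain ⟨K, hK, hdefect⟩ :=
    exists_measureReal_sub_setIntegral_setIntegral_le hf hpos hone hp hdecay
  set c := max C₀ 1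
  refine ⟨K * c, by positivity, fun r hr => ?_⟩
  have hr0 : 0 < r := by linarith
  have hrn : 0 < r ^ n := by positivity
  have hcollar (δ : ℝ) (hδ : 0 < δ) :
      volume (innerCollar (r • Q) δ) ≤ ENNReal.ofReal (c * r ^ n / r * δ) := by
    simpa using measure_innerCollar_smul_le volume
      (fun δ hδ => (hC₀ δ hδ).trans (by gcongr; exact le_max_left _ _)) hr0 hδ
  obtain ⟨hlow, hup⟩ := hdefect (hQm.const_smul₀ r) (hQb.smul₀ r).measure_lt_top.ne
    (by positivity) hcollar
  have hvol : volume.real (r • Q) = r ^ n * (volume Q).toReal := by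
    rw [measureReal_def, Measure.addHaar_smul_of_nonneg volume hr0.le, finrank_euclideanSpace_fin,
      ENNReal.toReal_mul, ENNReal.toReal_ofReal hrn.le]
  set I := ∫ x in r • Q, ∫ y in r • Q, f (x - y)
  rw [hvol] at hlow hup
  rw [show (r ^ n)⁻¹ * I - (volume Q).toReal = -((r ^ n * (volume Q).toReal - I) / r ^ n) by
    field_simp; ring, abs_neg, abs_of_nonneg (div_nonneg hlow hrn.le), div_le_iff₀ hrn]
  calc _ ≤ K * (c * r ^ n / r) := hup
    _ = K * c / r * r ^ n := by ring

/-- Refined asymptotics: if `f ∈ L¹(ℝⁿ)` is nonnegative with `∫ f = 1` and its mass outside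
the ball of radius `r` is `O(r^{−p})` for some `p > 1`, and `Q ⊂ ℝⁿ` is a bounded measurable
set whose `δ`-inner-collar has measure `≤ C₀δ` (as for a bounded `C¹` domain), then
`|r^{−n} ∫_{rQ} ∫_{rQ} f(x−y) dx dy − meas(Q)| = O(1/r)`. -/
theorem stmt11 {n : ℕ} (f : EuclideanSpace ℝ (Fin n) → ℝ)
    (hf : Integrable f (volume : Measure (EuclideanSpace ℝ (Fin n))))
    (hpos : ∀ᵐ x ∂(volume : Measure (EuclideanSpace ℝ (Fin n))), 0 ≤ f x)
    (hone : ∫ x : EuclideanSpace ℝ (Fin n), f x = 1)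
    (p C₁ : ℝ) (hp : 1 < p) (hC₁ : 0 < C₁)
    (hdecay : ∀ r : ℝ, 1 ≤ r →
      1 - ∫ x in Metric.closedBall (0 : EuclideanSpace ℝ (Fin n)) r, f x ≤ C₁ / r ^ p)
    (Q : Set (EuclideanSpace ℝ (Fin n))) (hQm : MeasurableSet Q)
    (hQb : Bornology.IsBounded Q)
    (C₀ : ℝ) (hC₀ : ∀ δ : ℝ, 0 < δ →
      volume {x ∈ Q | Metric.infDist x Qᶜ ≤ δ} ≤ ENNReal.ofReal (C₀ * δ)) :
    ∃ C : ℝ, 0 < C ∧ ∀ r : ℝ, 1 ≤ r →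
      |(r ^ n)⁻¹ * (∫ x in r • Q, ∫ y in r • Q, f (x - y)) - (volume Q).toReal| ≤ C / r :=
  stmt11_general f hf hpos hone p C₁ hp hdecay Q hQm hQb C₀ hC₀
end

section
/- Fix ε ∈ (0,1). Let γ : [0,∞) → (0,∞) be decreasing, with t ↦ γ(|t|)^{1−ε} square-integrable on ℝ, and such that for every s₀ > 0 there is a constant C₀ with γ(max(s−s₀,0)) ≤ C₀·γ(s)^{1−ε} for all s ≥ 0. Let φ ∈ L²(ℝ) satisfy |φ(t)| ≤ γ(|t|) for all t, let Ω ⊂ ℝ² be a bounded measurable set, and suppose ψ ∈ L²(ℝ) and λ > 0 satisfy λ·ψ(x) = ∫_ℝ k_Ω(x,y)·ψ(y) dy for all x ∈ ℝ. Then there is a constant C such that |ψ(t)| ≤ C·γ(|t|)^{1−ε} for all t ∈ ℝ. -/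
open MeasureTheory Complex ComplexConjugate
open scoped ENNReal

/-- Time-frequency shift: `ρ(τ,σ)f(t) = exp(πiτσ)·exp(2πiσt)·f(t+τ)`. -/
noncomputable def rho (τ σ : ℝ) (f : ℝ → ℂ) : ℝ → ℂ := fun t =>
  Complex.exp (Real.pi * Complex.I * τ * σ) *
    Complex.exp (2 * Real.pi * Complex.I * σ * t) * f (t + τ)

/-- The concentration kernel `k_Ω(x,y) = ∫∫_Ω ρ(τ,σ)φ(x)·conj(ρ(τ,σ)φ(y)) dτ dσ`. -/
noncomputable def kker (φ : ℝ → ℂ) (Ω : Set (ℝ × ℝ)) (x y : ℝ) : ℂ :=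
  ∫ p in Ω, rho p.1 p.2 φ x * conj (rho p.1 p.2 φ y)

/-!
Since `Ω` is bounded, only shifts `|τ| ≤ R` enter the kernel, and the shift hypothesis on `γ`
turns `|φ(x + τ)| ≤ γ(|x + τ|)` into `|φ(x + τ)| ≤ w(x) := C₀ γ(|x|)^{1-ε}`. Hence
`|k_Ω(x,y)| ≤ |Ω| w(x) w(y)`, and the eigenvalue equation gives
`λ |ψ(t)| ≤ |Ω| w(t) ∫ w |ψ|`, where the integral is finite by Cauchy–Schwarz since
`w, ψ ∈ L²`.
-/

lemma norm_rho_apply (τ σ : ℝ) (f : ℝ → ℂ) (t : ℝ) : ‖rho τ σ f t‖ = ‖f (t + τ)‖ := by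
  have h₁ : (Real.pi : ℂ) * I * τ * σ = ((Real.pi * τ * σ : ℝ) : ℂ) * I := by push_cast; ring
  have h₂ : (2 : ℂ) * Real.pi * I * σ * t = ((2 * Real.pi * σ * t : ℝ) : ℂ) * I := by
    push_cast; ring
  simp only [rho, h₁, h₂, norm_mul, norm_exp_ofReal_mul_I, one_mul]

lemma apply_abs_add_le_of_antitoneOn {γ g : ℝ → ℝ} {R τ : ℝ} (hγ : AntitoneOn γ (Set.Ici 0))
    (hshift : ∀ s, 0 ≤ s → γ (max (s - R) 0) ≤ g s) (hτ : |τ| ≤ R) (t : ℝ) :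
    γ |t + τ| ≤ g |t| := by
  have hle : max (|t| - R) 0 ≤ |t + τ| := by
    have := abs_sub_abs_le_abs_sub t (-τ)
    rw [sub_neg_eq_add, abs_neg] at this
    exact max_le (by linarith) (abs_nonneg _)
  exact (hγ (Set.mem_Ici.2 (le_max_right _ _)) (Set.mem_Ici.2 (abs_nonneg _)) hle).trans
    (hshift _ (abs_nonneg _))

lemma exists_pos_abs_fst_le_of_isBounded {Ω : Set (ℝ × ℝ)} (hΩ : Bornology.IsBounded Ω) :
    ∃ R, 0 < R ∧ ∀ p ∈ Ω, |p.1| ≤ R := by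
  obtain ⟨C, hC⟩ := isBounded_iff_forall_norm_le.mp hΩ
  exact ⟨max C 1, by positivity, fun p hp =>
    ((norm_fst_le p).trans (hC p hp)).trans (le_max_left _ _)⟩

lemma norm_kker_le {φ : ℝ → ℂ} {Ω : Set (ℝ × ℝ)} {w : ℝ → ℝ} {R : ℝ} (hΩ : volume Ω < ∞)
    (hΩR : ∀ p ∈ Ω, |p.1| ≤ R) (hφw : ∀ t τ, |τ| ≤ R → ‖φ (t + τ)‖ ≤ w t) (x y : ℝ) :
    ‖kker φ Ω x y‖ ≤ w x * w y * volume.real Ω := by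
  refine norm_setIntegral_le_of_norm_le_const hΩ fun p hp => ?_
  have hx := hφw x p.1 (hΩR p hp)
  rw [norm_mul, RCLike.norm_conj, norm_rho_apply, norm_rho_apply]
  exact mul_le_mul hx (hφw y p.1 (hΩR p hp)) (norm_nonneg _) ((norm_nonneg _).trans hx)

lemma norm_le_of_eigen_of_norm_kernel_le {α : Type*} [MeasurableSpace α] {μ : Measure α}
    {k : α → α → ℂ} {ψ : α → ℂ} {w : α → ℝ} {M : ℝ} {lam : ℂ} (hlam : lam ≠ 0)
    (hk : ∀ x y, ‖k x y‖ ≤ w x * w y * M) (hint : Integrable (fun y => w y * ‖ψ y‖) μ)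
    (heig : ∀ x, lam * ψ x = ∫ y, k x y * ψ y ∂μ) (t : α) :
    ‖ψ t‖ ≤ M * (∫ y, w y * ‖ψ y‖ ∂μ) / ‖lam‖ * w t := by
  have hbound : ‖lam‖ * ‖ψ t‖ ≤ w t * M * ∫ y, w y * ‖ψ y‖ ∂μ := by
    rw [← norm_mul, heig t, ← integral_const_mul]
    refine (norm_integral_le_integral_norm _).trans <| integral_mono_of_nonneg
      (.of_forall fun y => norm_nonneg _) (hint.const_mul _) (.of_forall fun y => ?_)
    calc ‖k t y * ψ y‖ = ‖k t y‖ * ‖ψ y‖ := norm_mul _ _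
      _ ≤ w t * w y * M * ‖ψ y‖ := mul_le_mul_of_nonneg_right (hk t y) (norm_nonneg _)
      _ = w t * M * (w y * ‖ψ y‖) := by ring
  rw [div_mul_eq_mul_div, le_div_iff₀ (norm_pos_iff.mpr hlam)]
  linarith

theorem stmt15_general (ε : ℝ) (γ : ℝ → ℝ)
    (hγdec : AntitoneOn γ (Set.Ici 0))
    (hγL2 : MemLp (fun t : ℝ => γ |t| ^ (1 - ε)) 2 (volume : Measure ℝ))
    (hγshift : ∀ s₀ : ℝ, 0 < s₀ → ∃ C₀ : ℝ, ∀ s : ℝ, 0 ≤ s →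
      γ (max (s - s₀) 0) ≤ C₀ * γ s ^ (1 - ε))
    (φ : ℝ → ℂ) (hφb : ∀ t : ℝ, ‖φ t‖ ≤ γ |t|)
    (Ω : Set (ℝ × ℝ)) (hΩb : Bornology.IsBounded Ω)
    (ψ : ℝ → ℂ) (hψ : MemLp ψ 2 (volume : Measure ℝ))
    (lam : ℝ) (hlam : 0 < lam)
    (heig : ∀ x : ℝ, (lam : ℂ) * ψ x = ∫ y : ℝ, kker φ Ω x y * ψ y) :
    ∃ C : ℝ, ∀ t : ℝ, ‖ψ t‖ ≤ C * γ |t| ^ (1 - ε) := by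
  obtain ⟨R, hR, hΩR⟩ := exists_pos_abs_fst_le_of_isBounded hΩb
  obtain ⟨C₀, hC₀⟩ := hγshift R hR
  set w : ℝ → ℝ := fun t => C₀ * γ |t| ^ (1 - ε)
  have hφw : ∀ t τ, |τ| ≤ R → ‖φ (t + τ)‖ ≤ w t := fun t τ hτ =>
    (hφb _).trans (apply_abs_add_le_of_antitoneOn hγdec hC₀ hτ t)
  have hint : Integrable (fun y => w y * ‖ψ y‖) volume :=
    (hγL2.const_mul C₀).integrable_mul hψ.norm
  have hlam' : (lam : ℂ) ≠ 0 := ofReal_ne_zero.mpr hlam.ne'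
  refine ⟨volume.real Ω * (∫ y, w y * ‖ψ y‖) / ‖(lam : ℂ)‖ * C₀, fun t => ?_⟩
  have := norm_le_of_eigen_of_norm_kernel_le hlam'
    (norm_kker_le hΩb.measure_lt_top hΩR hφw) hint heig t
  simpa only [w, mul_assoc] using this

/-- Decay of eigenfunctions of the concentration operator: if `|φ| ≤ γ(|·|)` for a decreasing
positive `γ` with `γ(|·|)^{1−ε} ∈ L²` and `γ(max(s−s₀,0)) = O(γ(s)^{1−ε})` for each `s₀ > 0`,
then any eigenfunction `ψ` with eigenvalue `λ > 0` satisfies `|ψ(t)| ≤ C·γ(|t|)^{1−ε}`. -/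
theorem stmt15 (ε : ℝ) (hε0 : 0 < ε) (hε1 : ε < 1)
    (γ : ℝ → ℝ) (hγpos : ∀ s : ℝ, 0 ≤ s → 0 < γ s)
    (hγdec : AntitoneOn γ (Set.Ici 0))
    (hγL2 : MemLp (fun t : ℝ => γ |t| ^ (1 - ε)) 2 (volume : Measure ℝ))
    (hγshift : ∀ s₀ : ℝ, 0 < s₀ → ∃ C₀ : ℝ, ∀ s : ℝ, 0 ≤ s →
      γ (max (s - s₀) 0) ≤ C₀ * γ s ^ (1 - ε))
    (φ : ℝ → ℂ) (hφ : MemLp φ 2 (volume : Measure ℝ))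
    (hφb : ∀ t : ℝ, ‖φ t‖ ≤ γ |t|)
    (Ω : Set (ℝ × ℝ)) (hΩm : MeasurableSet Ω) (hΩb : Bornology.IsBounded Ω)
    (ψ : ℝ → ℂ) (hψ : MemLp ψ 2 (volume : Measure ℝ))
    (lam : ℝ) (hlam : 0 < lam)
    (heig : ∀ x : ℝ, (lam : ℂ) * ψ x = ∫ y : ℝ, kker φ Ω x y * ψ y) :
    ∃ C : ℝ, ∀ t : ℝ, ‖ψ t‖ ≤ C * γ |t| ^ (1 - ε) :=
  stmt15_general ε γ hγdec hγL2 hγshift φ hφb Ω hΩb ψ hψ lam hlam heig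
end
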